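/- Let I=⟨A,∅,R,R?⟩ be an AtIAF, S⊆A a set of arguments, and w₁,w₂∉A two distinct fresh arguments; let I'=⟨A∪{w₁}, {w₂}, R∪{(w₂,s) | s∈S}, R?∪{(w₁,w₂)}⟩. Then PosVer_pr(I,S)=true if and only if (w₁,w₂)∈RE⁺(I'+{w₂}, S∪{w₁}, (pr,true)). -/
import Mathlib


universe u

/-- An abstract argumentation framework: a set of arguments with an attack relation. -/
structure AF (α : Type u) where
  args : Set α
  att : Set (α × α)

namespace AF

variable {α : Type u}

/-- `S⁺_F`: arguments attacked by `S`. -/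
def plusSet (F : AF α) (S : Set α) : Set α := {a | a ∈ F.args ∧ ∃ b ∈ S, (b, a) ∈ F.att}

/-- `S⁻_F`: arguments attacking `S`. -/
def minusSet (F : AF α) (S : Set α) : Set α := {a | a ∈ F.args ∧ ∃ b ∈ S, (a, b) ∈ F.att}

/-- `S` is conflict-free in `F`. -/
def confFree (F : AF α) (S : Set α) : Prop := S ∩ F.plusSet S = ∅

/-- `S` defends `a` in `F`: every attacker of `a` is attacked by `S`. -/
def defends (F : AF α) (S : Set α) (a : α) : Prop := ∀ b, (b, a) ∈ F.att → b ∈ F.plusSet S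

/-- The characteristic function `Γ_F(S)`: arguments defended by `S`. -/
def Γ (F : AF α) (S : Set α) : Set α := {a | a ∈ F.args ∧ F.defends S a}

/-- Admissible: conflict-free and self-defending. -/
def isAd (F : AF α) (S : Set α) : Prop := S ⊆ F.args ∧ F.confFree S ∧ S ⊆ F.Γ S

/-- Stable: conflict-free and attacking exactly the outside. -/
def isSt (F : AF α) (S : Set α) : Prop := S ⊆ F.args ∧ F.confFree S ∧ F.plusSet S = F.args \ S

/-- Complete: admissible and containing all defended arguments. -/
def isCo (F : AF α) (S : Set α) : Prop := F.isAd S ∧ F.Γ S ⊆ S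

/-- Grounded: ⊆-minimal complete. -/
def isGr (F : AF α) (S : Set α) : Prop := F.isCo S ∧ ∀ T, F.isCo T → T ⊆ S → T = S

/-- Preferred: ⊆-maximal admissible. -/
def isPr (F : AF α) (S : Set α) : Prop := F.isAd S ∧ ∀ T, F.isAd T → S ⊆ T → S = T

end AF

/-- The five common semantics. -/
inductive Sem : Type
  | ad | st | co | gr | pr
deriving DecidableEq

/-- `S` is a `σ`-extension of `F`. -/
def extOf {α : Type u} : Sem → AF α → Set α → Prop
  | .ad => AF.isAd
  | .st => AF.isSt
  | .co => AF.isCo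
  | .gr => AF.isGr
  | .pr => AF.isPr

/-- An incomplete argumentation framework (data part). -/
structure IAF (α : Type u) where
  A : Set α
  Aq : Set α
  R : Set (α × α)
  Rq : Set (α × α)

namespace IAF

variable {α : Type u}

/-- Well-formedness: `A`,`A?` disjoint; `R`,`R?` disjoint subsets of `(A∪A?)×(A∪A?)`. -/
def WF (I : IAF α) : Prop :=
  Disjoint I.A I.Aq ∧ Disjoint I.R I.Rq ∧
  I.R ⊆ (I.A ∪ I.Aq) ×ˢ (I.A ∪ I.Aq) ∧
  I.Rq ⊆ (I.A ∪ I.Aq) ×ˢ (I.A ∪ I.Aq)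

/-- `cert(I)`: the AF projected on the certain part. -/
def cert (I : IAF α) : AF α := ⟨I.A, I.R ∩ I.A ×ˢ I.A⟩

/-- `I'` is a partial completion of `I`. -/
def PartOf (I' I : IAF α) : Prop :=
  I'.WF ∧ I.A ⊆ I'.A ∧ I'.A ⊆ I.A ∪ I.Aq ∧
  I.R ∩ (I'.A ∪ I'.Aq) ×ˢ (I'.A ∪ I'.Aq) ⊆ I'.R ∧
  I'.R ⊆ I.R ∪ I.Rq ∧ I'.Aq ⊆ I.Aq ∧ I'.Rq ⊆ I.Rq

/-- `F` is a completion of `I`. -/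
def IsCompletion (I : IAF α) (F : AF α) : Prop := ∃ I' : IAF α, I'.PartOf I ∧ F = I'.cert

/-- `I + R₀` for a set of uncertain attacks. -/
def addR (I : IAF α) (R0 : Set (α × α)) : IAF α := ⟨I.A, I.Aq, I.R ∪ R0, I.Rq \ R0⟩

/-- `I − R₀` for a set of uncertain attacks. -/
def subR (I : IAF α) (R0 : Set (α × α)) : IAF α := ⟨I.A, I.Aq, I.R, I.Rq \ R0⟩

/-- `I + A₀` for a set of uncertain arguments. -/
def addA (I : IAF α) (A0 : Set α) : IAF α := ⟨I.A ∪ A0, I.Aq \ A0, I.R, I.Rq⟩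

/-- `I − A₀` for a set of uncertain arguments. -/
def subA (I : IAF α) (A0 : Set α) : IAF α :=
  ⟨I.A, I.Aq \ A0,
   I.R \ {p | p ∈ I.R ∪ I.Rq ∧ (p.1 ∈ A0 ∨ p.2 ∈ A0)},
   I.Rq \ {p | p ∈ I.R ∪ I.Rq ∧ (p.1 ∈ A0 ∨ p.2 ∈ A0)}⟩

/-- `S⁺_I`. -/
def plusI (I : IAF α) (S : Set α) : Set α := {a | a ∈ I.A ∪ I.Aq ∧ ∃ b ∈ S, (b, a) ∈ I.R}

/-- `S⁻_I`. -/
def minusI (I : IAF α) (S : Set α) : Set α := {a | a ∈ I.A ∪ I.Aq ∧ ∃ b ∈ S, (a, b) ∈ I.R}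

/-- `S^∼_I`. -/
def simI (I : IAF α) (S : Set α) : Set α :=
  {a | a ∈ I.A ∪ I.Aq ∧ ∀ b ∈ S, (b, a) ∉ I.R ∪ I.Rq}

end IAF

/-- An element of an IAF: either an argument or an attack. -/
inductive Elem (α : Type u) : Type u
  | arg (a : α)
  | att (r : α × α)

/-- `e` is an uncertain element of `I`, i.e. `e ∈ A? ∪ R?`. -/
def IAF.isUnc {α : Type u} (I : IAF α) : Elem α → Prop
  | .arg a => a ∈ I.Aq
  | .att r => r ∈ I.Rq

/-- `I + {e}`. -/
def IAF.addE {α : Type u} (I : IAF α) : Elem α → IAF α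
  | .arg a => I.addA {a}
  | .att r => I.addR {r}

/-- `I − {e}`. -/
def IAF.subE {α : Type u} (I : IAF α) : Elem α → IAF α
  | .arg a => I.subA {a}
  | .att r => I.subR {r}

/-- `e` is the unique uncertain element of `I`, i.e. `A? ∪ R? = {e}`. -/
def onlyUnc {α : Type u} (I : IAF α) : Elem α → Prop
  | .arg a => I.Aq = {a} ∧ I.Rq = ∅
  | .att r => I.Aq = ∅ ∧ I.Rq = {r}

/-- A verification status: a semantics together with true/false. -/
abbrev VStatus := Sem × Bool

/-- `S` has verification status `j` in the AF `F`. -/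
def hasStatus {α : Type u} (F : AF α) (S : Set α) (j : VStatus) : Prop :=
  cond j.2 (extOf j.1 F S) (¬ extOf j.1 F S)

/-- `S` is stable-`j` w.r.t. `I`. -/
def IAF.stableJ {α : Type u} (I : IAF α) (S : Set α) (j : VStatus) : Prop :=
  ∀ F, I.IsCompletion F → hasStatus F S j

/-- `S` is stable-`σ` w.r.t. `I`. -/
def IAF.stableSem {α : Type u} (I : IAF α) (S : Set α) (σ : Sem) : Prop :=
  I.stableJ S (σ, true) ∨ I.stableJ S (σ, false)

/-- `RE⁺(I,S,j)`: uncertain elements whose addition is `j`-relevant for `S` w.r.t. `I`. -/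
def REplus {α : Type u} (I : IAF α) (S : Set α) (j : VStatus) : Set (Elem α) :=
  {e | I.isUnc e ∧ ∃ I' : IAF α, I'.PartOf I ∧ onlyUnc I' e ∧
    hasStatus (I'.addE e).cert S j ∧ ¬ hasStatus (I'.subE e).cert S j}

/-- `RE⁻(I,S,j)`: uncertain elements whose removal is `j`-relevant for `S` w.r.t. `I`. -/
def REminus {α : Type u} (I : IAF α) (S : Set α) (j : VStatus) : Set (Elem α) :=
  {e | I.isUnc e ∧ ∃ I' : IAF α, I'.PartOf I ∧ onlyUnc I' e ∧
    hasStatus (I'.subE e).cert S j ∧ ¬ hasStatus (I'.addE e).cert S j}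

/-- `e` is `σ`-irrelevant for `S` w.r.t. `I`. -/
def irrelevant {α : Type u} (I : IAF α) (S : Set α) (σ : Sem) (e : Elem α) : Prop :=
  e ∉ REplus I S (σ, true) ∧ e ∉ REminus I S (σ, true) ∧
  e ∉ REplus I S (σ, false) ∧ e ∉ REminus I S (σ, false)

/-- `PosVer_σ(I,S) = true`. -/
def PosVer {α : Type u} (σ : Sem) (I : IAF α) (S : Set α) : Prop :=
  ∃ F, I.IsCompletion F ∧ extOf σ F S

/-- `NecVer_σ(I,S) = true`. -/
def NecVer {α : Type u} (σ : Sem) (I : IAF α) (S : Set α) : Prop :=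
  ∀ F, I.IsCompletion F → extOf σ F S

/-- `SRE⁺(I,S,j)`: uncertain elements whose addition is strongly `j`-relevant. -/
def SREplus {α : Type u} (I : IAF α) (S : Set α) (j : VStatus) : Set (Elem α) :=
  {e | I.isUnc e ∧ ∀ I' : IAF α, I'.PartOf (I.subE e) → ¬ I'.stableJ S j}

/-- `SRE⁻(I,S,j)`: uncertain elements whose removal is strongly `j`-relevant. -/
def SREminus {α : Type u} (I : IAF α) (S : Set α) (j : VStatus) : Set (Elem α) :=
  {e | I.isUnc e ∧ ∀ I' : IAF α, I'.PartOf (I.addE e) → ¬ I'.stableJ S j}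

/-- The `OutRel(I,S,(a,b))` predicate. -/
def OutRel {α : Type u} (I : IAF α) (S : Set α) (r : α × α) : Prop :=
  (I.minusI {r.2} \ {r.1}) ∩ I.simI S = ∅ ∧
  PosVer Sem.co
    ((I.addR {p | p ∈ I.Rq ∧ p.1 ∈ S ∧ p.2 ∈ I.minusI {r.2} \ {r.1}}).subR
      {p | p ∈ I.Rq ∧ p.1 ≠ r.1 ∧ p.2 = r.2}) S



namespace Stmt10Aux

variable {α : Type u}

/-- The extra attacks from `w2` onto `S`. -/
def satt (S : Set α) (w2 : α) : Set (α × α) := {p | ∃ s ∈ S, p = (w2, s)}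

lemma mem_satt {S : Set α} {w2 b a : α} : (b, a) ∈ satt S w2 ↔ b = w2 ∧ a ∈ S := by
  constructor
  · rintro ⟨s, hs, heq⟩
    rw [Prod.mk.injEq] at heq
    exact ⟨heq.1, heq.2 ▸ hs⟩
  · rintro ⟨rfl, hA⟩; exact ⟨a, hA, rfl⟩

/-- The reduced AF with the attack `(w1,w2)`. -/
def Fp (A : Set α) (R2 : Set (α × α)) (S : Set α) (w1 w2 : α) : AF α :=
  ⟨A ∪ {w1, w2}, R2 ∪ satt S w2 ∪ {(w1, w2)}⟩

/-- The reduced AF without the attack `(w1,w2)`. -/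
def Fm (A : Set α) (R2 : Set (α × α)) (S : Set α) (w1 w2 : α) : AF α :=
  ⟨A ∪ {w1, w2}, R2 ∪ satt S w2⟩

section Core

variable {A : Set α} {R2 : Set (α × α)} {S T : Set α} {w1 w2 : α}
  (hR2 : ∀ p ∈ R2, p.1 ∈ A ∧ p.2 ∈ A) (hS : S ⊆ A)
  (hw1 : w1 ∉ A) (hw2 : w2 ∉ A) (hne : w1 ≠ w2)

lemma mem_attP {b a : α} :
    (b, a) ∈ (Fp A R2 S w1 w2).att ↔ (b, a) ∈ R2 ∨ (b = w2 ∧ a ∈ S) ∨ (b = w1 ∧ a = w2) := by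
  simp only [Fp, Set.mem_union, Set.mem_singleton_iff, mem_satt, Prod.mk.injEq, or_assoc]

include hR2 hS hw1 hne in
lemma no_att_w1 : ∀ b, (b, w1) ∉ (Fp A R2 S w1 w2).att := by
  intro b hb
  rcases mem_attP.mp hb with h | ⟨_, h⟩ | ⟨_, h⟩
  · exact hw1 (hR2 _ h).2
  · exact hw1 (hS h)
  · exact hne h

include hR2 hS hw2 in
lemma att_w2 : ∀ b, (b, w2) ∈ (Fp A R2 S w1 w2).att ↔ b = w1 := by
  intro b
  rw [mem_attP]
  constructor
  · rintro (h | ⟨_, h⟩ | ⟨h, _⟩)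
    · exact absurd (hR2 _ h).2 hw2
    · exact absurd (hS h) hw2
    · exact h
  · intro h; exact Or.inr (Or.inr ⟨h, rfl⟩)

include hR2 hS hw1 hw2 hne in
lemma ad_up (hT : T ⊆ A) (hAd : AF.isAd ⟨A, R2⟩ T) :
    (Fp A R2 S w1 w2).isAd (T ∪ {w1}) := by
  obtain ⟨hsub, hcf, hdef⟩ := hAd
  rw [AF.confFree, Set.eq_empty_iff_forall_notMem] at hcf
  refine ⟨?_, ?_, ?_⟩
  · intro x hx
    rcases hx with hx | hx
    · exact Or.inl (hT hx)
    · exact Or.inr (Or.inl hx)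
  · rw [AF.confFree, Set.eq_empty_iff_forall_notMem]
    rintro a ⟨haT, _, b, hbT, hatt⟩
    rcases haT with haT | haT
    · -- a ∈ T ⊆ A
      rcases mem_attP.mp hatt with h | ⟨hb, _⟩ | ⟨_, ha2⟩
      · rcases hbT with hbT | hbT
        · exact hcf a ⟨haT, hT haT, b, hbT, h⟩
        · exact hw1 (hbT ▸ (hR2 _ h).1)
      · rcases hbT with hbT | hbT
        · exact hw2 (hT (hb ▸ hbT))
        · have hb1 : b = w1 := hbT
          subst hb1; exact hne hb
      · exact hw2 (ha2 ▸ hT haT)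
    · exact no_att_w1 hR2 hS hw1 hne b (haT ▸ hatt)
  · intro a haT
    rcases haT with haT | haT
    · refine ⟨Or.inl (hT haT), ?_⟩
      intro b hb
      rcases mem_attP.mp hb with h | ⟨hb2, _⟩ | ⟨_, ha2⟩
      · obtain ⟨_, hdefa⟩ := hdef haT
        obtain ⟨hbA, c, hcT, hc⟩ := hdefa b h
        exact ⟨Or.inl hbA, c, Or.inl hcT, mem_attP.mpr (Or.inl hc)⟩
      · subst hb2
        exact ⟨Or.inr (Or.inr rfl), w1, Or.inr rfl,
          mem_attP.mpr (Or.inr (Or.inr ⟨rfl, rfl⟩))⟩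
      · exact absurd (ha2 ▸ hT haT) hw2
    · rw [Set.mem_singleton_iff] at haT
      subst haT
      refine ⟨Or.inr (Or.inl rfl), ?_⟩
      intro b hb
      exact absurd hb (no_att_w1 hR2 hS hw1 hne b)

include hR2 hS hw1 hw2 hne in
lemma ad_down (hAd : (Fp A R2 S w1 w2).isAd T) :
    w2 ∉ T ∧ AF.isAd ⟨A, R2⟩ (T ∩ A) := by
  obtain ⟨hsub, hcf, hdef⟩ := hAd
  rw [AF.confFree, Set.eq_empty_iff_forall_notMem] at hcf
  have hw2T : w2 ∉ T := by
    intro hw2T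
    -- w2 is defended, but its only attacker is w1; also w1 ∈ T would break cf
    obtain ⟨_, hdefw2⟩ := hdef hw2T
    obtain ⟨_, c, hcT, hc⟩ := hdefw2 w1 (mem_attP.mpr (Or.inr (Or.inr ⟨rfl, rfl⟩)))
    exact no_att_w1 hR2 hS hw1 hne c hc
  refine ⟨hw2T, ?_, ?_, ?_⟩
  · exact Set.inter_subset_right
  · rw [AF.confFree, Set.eq_empty_iff_forall_notMem]
    rintro a ⟨⟨haT, haA⟩, _, b, ⟨hbT, hbA⟩, hatt⟩
    exact hcf a ⟨haT, Or.inl haA, b, hbT, mem_attP.mpr (Or.inl hatt)⟩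
  · rintro a ⟨haT, haA⟩
    refine ⟨haA, ?_⟩
    intro b hb
    obtain ⟨_, hdefa⟩ := hdef haT
    obtain ⟨_, c, hcT, hc⟩ := hdefa b (mem_attP.mpr (Or.inl hb))
    have hbA : b ∈ A := (hR2 _ hb).1
    rcases mem_attP.mp hc with h | ⟨hc2, _⟩ | ⟨_, hb2⟩
    · exact ⟨hbA, c, ⟨hcT, (hR2 _ h).1⟩, h⟩
    · exact absurd (hc2 ▸ hcT) hw2T
    · exact absurd (hb2 ▸ hbA) hw2

end Core

end Stmt10Aux

namespace Stmt10Aux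

section Core2

variable {α : Type u} {A : Set α} {R2 : Set (α × α)} {S : Set α} {w1 w2 : α}
  (hR2 : ∀ p ∈ R2, p.1 ∈ A ∧ p.2 ∈ A) (hS : S ⊆ A)
  (hw1 : w1 ∉ A) (hw2 : w2 ∉ A) (hne : w1 ≠ w2)

include hR2 hS hw1 hw2 hne in
lemma pr_iff : AF.isPr ⟨A, R2⟩ S ↔ (Fp A R2 S w1 w2).isPr (S ∪ {w1}) := by
  have hSw1A : (S ∪ {w1}) ∩ A = S := by
    ext x
    simp only [Set.mem_inter_iff, Set.mem_union, Set.mem_singleton_iff]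
    constructor
    · rintro ⟨hx | hx, hxA⟩
      · exact hx
      · exact absurd (hx ▸ hxA) hw1
    · intro hx; exact ⟨Or.inl hx, hS hx⟩
  constructor
  · rintro ⟨hAd, hMax⟩
    refine ⟨ad_up hR2 hS hw1 hw2 hne hS hAd, ?_⟩
    intro T' hAd' hsub
    obtain ⟨hw2T', hAdT'⟩ := ad_down hR2 hS hw1 hw2 hne hAd'
    have hSsub : S ⊆ T' ∩ A := fun x hx => ⟨hsub (Or.inl hx), hS hx⟩
    have hEq : S = T' ∩ A := hMax _ hAdT' hSsub
    apply Set.Subset.antisymm hsub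
    intro x hxT'
    rcases hAd'.1 hxT' with hxA | hx12
    · exact Or.inl (hEq ▸ (⟨hxT', hxA⟩ : x ∈ T' ∩ A))
    · rcases hx12 with hx1 | hx2
      · exact Or.inr hx1
      · exact absurd (Set.mem_singleton_iff.mp hx2 ▸ hxT') hw2T'
  · rintro ⟨hAd', hMax'⟩
    obtain ⟨hw2T, hAdS⟩ := ad_down hR2 hS hw1 hw2 hne hAd'
    rw [hSw1A] at hAdS
    refine ⟨hAdS, ?_⟩
    intro T hAdT hsub
    have hTA : T ⊆ A := hAdT.1
    have hup := ad_up hR2 hS hw1 hw2 hne hTA hAdT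
    have hsub' : S ∪ {w1} ⊆ T ∪ {w1} := Set.union_subset_union_left _ hsub
    have hEq := hMax' _ hup hsub'
    have : (S ∪ {w1}) ∩ A = (T ∪ {w1}) ∩ A := by rw [hEq]
    rw [hSw1A] at this
    rw [this]
    ext x
    simp only [Set.mem_inter_iff, Set.mem_union, Set.mem_singleton_iff]
    constructor
    · rintro ⟨hx | hx, hxA⟩
      · exact hx
      · exact absurd (hx ▸ hxA) hw1
    · intro hx; exact ⟨Or.inl hx, hTA hx⟩

include hR2 hS hw1 hw2 hne in
lemma not_pr_m : ¬ (Fm A R2 S w1 w2).isPr (S ∪ {w1}) := by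
  have hattM : ∀ b a : α, (b, a) ∈ (Fm A R2 S w1 w2).att ↔
      (b, a) ∈ R2 ∨ (b = w2 ∧ a ∈ S) := by
    intro b a
    simp only [Fm, Set.mem_union, mem_satt]
  have hnoatt_w2 : ∀ b, (b, w2) ∉ (Fm A R2 S w1 w2).att := by
    intro b hb
    rcases (hattM b w2).mp hb with h | ⟨_, h⟩
    · exact hw2 (hR2 _ h).2
    · exact hw2 (hS h)
  rintro ⟨⟨hsub, hcf, hdef⟩, hmax⟩
  rcases Set.eq_empty_or_nonempty S with hSe | ⟨s, hs⟩
  · -- S empty : {w1, w2} is a strictly larger admissible set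
    have hAd2 : (Fm A R2 S w1 w2).isAd {w1, w2} := by
      refine ⟨?_, ?_, ?_⟩
      · intro x hx
        rcases hx with hx | hx
        · exact Or.inr (Or.inl hx)
        · exact Or.inr (Or.inr hx)
      · rw [AF.confFree, Set.eq_empty_iff_forall_notMem]
        rintro a ⟨haT, _, b, hbT, hatt⟩
        rcases (hattM b a).mp hatt with h | ⟨_, h⟩
        · rcases hbT with hb | hb
          · exact hw1 (hb ▸ (hR2 _ h).1)
          · exact hw2 ((Set.mem_singleton_iff.mp hb) ▸ (hR2 _ h).1)
        · exact absurd (hSe ▸ h) (Set.notMem_empty a)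
      · intro a haT
        have haArgs : a ∈ (Fm A R2 S w1 w2).args := by
          rcases haT with h | h
          · exact Or.inr (Or.inl h)
          · exact Or.inr (Or.inr h)
        refine ⟨haArgs, ?_⟩
        intro b hb
        rcases haT with h | h
        · subst h
          rcases (hattM b a).mp hb with hR | ⟨_, hSmem⟩
          · exact absurd (hR2 _ hR).2 hw1
          · exact absurd (hS hSmem) hw1
        · rw [Set.mem_singleton_iff] at h
          subst h
          exact absurd hb (hnoatt_w2 b)
    have := hmax _ hAd2 (by
      rw [hSe]
      intro x hx
      rcases hx with hx | hx
      · exact absurd hx (Set.notMem_empty _)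
      · exact Or.inl hx)
    have hw2mem : w2 ∈ S ∪ {w1} := this ▸ (Or.inr rfl)
    rcases hw2mem with h | h
    · exact hw2 (hS h)
    · exact hne (Set.mem_singleton_iff.mp h).symm
  · -- S nonempty : s is attacked by w2, which is unattacked
    obtain ⟨_, hdefs⟩ := hdef (Or.inl hs)
    obtain ⟨_, c, _, hc⟩ := hdefs w2 ((hattM w2 s).mpr (Or.inr ⟨rfl, hs⟩))
    exact hnoatt_w2 c hc

end Core2

end Stmt10Aux

namespace Stmt10Aux

section Compl

variable {α : Type u} {I : IAF α}

lemma RsubA (hWF : I.WF) (hAt : I.Aq = ∅) : I.R ⊆ I.A ×ˢ I.A := by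
  have := hWF.2.2.1
  rwa [hAt, Set.union_empty] at this

lemma RqsubA (hWF : I.WF) (hAt : I.Aq = ∅) : I.Rq ⊆ I.A ×ˢ I.A := by
  have := hWF.2.2.2
  rwa [hAt, Set.union_empty] at this

lemma completion_of (hWF : I.WF) (hAt : I.Aq = ∅) {R0 : Set (α × α)} (hR0 : R0 ⊆ I.Rq) :
    I.IsCompletion ⟨I.A, I.R ∪ R0⟩ := by
  have hRA := RsubA hWF hAt
  have hRqA := RqsubA hWF hAt
  have hsub : I.R ∪ R0 ⊆ I.A ×ˢ I.A := Set.union_subset hRA (hR0.trans hRqA)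
  refine ⟨⟨I.A, ∅, I.R ∪ R0, ∅⟩, ?_, ?_⟩
  · refine ⟨⟨Set.disjoint_empty _, Set.disjoint_empty _, ?_, ?_⟩, ?_, ?_, ?_, ?_, ?_, ?_⟩
    · rw [Set.union_empty]; exact hsub
    · exact Set.empty_subset _
    · exact subset_rfl
    · exact Set.subset_union_left
    · rw [Set.union_empty]
      exact Set.inter_subset_left.trans Set.subset_union_left
    · exact Set.union_subset_union_right _ hR0
    · exact Set.empty_subset _
    · exact Set.empty_subset _
  · show AF.mk I.A (I.R ∪ R0) = IAF.cert _
    rw [IAF.cert, Set.inter_eq_left.mpr hsub]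

lemma completion_shape (hWF : I.WF) (hAt : I.Aq = ∅) {F : AF α} (h : I.IsCompletion F) :
    ∃ R0, R0 ⊆ I.Rq ∧ F = ⟨I.A, I.R ∪ R0⟩ := by
  have hRA := RsubA hWF hAt
  have hRqA := RqsubA hWF hAt
  obtain ⟨I2, hpart, rfl⟩ := h
  obtain ⟨hWF2, hAsub, hAsup, hRlow, hRhigh, hAq, hRq⟩ := hpart
  have hAq2 : I2.Aq = ∅ := by
    rw [← Set.subset_empty_iff]; rw [hAt] at hAq; exact hAq
  have hA2 : I2.A = I.A := by
    apply subset_antisymm _ hAsub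
    rwa [hAt, Set.union_empty] at hAsup
  have hRsub : I.R ⊆ I2.R := by
    intro p hp
    exact hRlow ⟨hp, by rw [hAq2, Set.union_empty, hA2]; exact hRA hp⟩
  have hR2A : I2.R ⊆ I.A ×ˢ I.A := hRhigh.trans (Set.union_subset hRA hRqA)
  refine ⟨I2.R \ I.R, ?_, ?_⟩
  · intro p hp
    rcases hRhigh hp.1 with h1 | h1
    · exact absurd h1 hp.2
    · exact h1
  · rw [IAF.cert, hA2, Set.union_diff_cancel hRsub]
    rw [Set.inter_eq_left.mpr (hA2 ▸ hR2A)]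

end Compl

end Stmt10Aux

open Stmt10Aux

/-- reduction from `PosVer_pr` to `(pr,true)`-relevance of addition. -/
theorem stmt10 {α : Type u} (I : IAF α) (S : Set α) (w1 w2 : α)
    (hWF : I.WF) (hAt : I.Aq = ∅) (hS : S ⊆ I.A)
    (hw1 : w1 ∉ I.A) (hw2 : w2 ∉ I.A) (hne : w1 ≠ w2)
    (I' : IAF α)
    (hI' : I' = ⟨I.A ∪ {w1}, {w2}, I.R ∪ {p | ∃ s ∈ S, p = (w2, s)},
      I.Rq ∪ {(w1, w2)}⟩) :
    PosVer Sem.pr I S ↔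
      Elem.att (w1, w2) ∈ REplus (I'.addA {w2}) (S ∪ {w1}) (Sem.pr, true) := by
  subst hI'
  have hRA := RsubA hWF hAt
  have hRqA := RqsubA hWF hAt
  have hA'' : (I.A ∪ {w1}) ∪ {w2} = I.A ∪ {w1, w2} := by
    rw [Set.union_assoc, Set.singleton_union]
  have hw1m : w1 ∈ ({w1, w2} : Set α) := Or.inl rfl
  have hw2m : w2 ∈ ({w1, w2} : Set α) := Or.inr rfl
  have hR2 : ∀ R0 ⊆ I.Rq, ∀ p ∈ I.R ∪ R0, p.1 ∈ I.A ∧ p.2 ∈ I.A := by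
    intro R0 hR0 p hp
    rcases hp with hp | hp
    · exact hRA hp
    · exact hRqA (hR0 hp)
  have hsubP : ∀ R0 ⊆ I.Rq,
      ((I.R ∪ R0) ∪ satt S w2) ∪ {(w1, w2)} ⊆
        (I.A ∪ {w1, w2}) ×ˢ (I.A ∪ {w1, w2}) := by
    intro R0 hR0 p hp
    rcases hp with (hp | hp) | hp
    · have := hR2 R0 hR0 p hp
      exact ⟨Or.inl this.1, Or.inl this.2⟩
    · obtain ⟨s, hs, rfl⟩ := hp
      exact ⟨Or.inr hw2m, Or.inl (hS hs)⟩
    · rw [Set.mem_singleton_iff] at hp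
      subst hp
      exact ⟨Or.inr hw1m, Or.inr hw2m⟩
  constructor
  · -- PosVer → relevance
    rintro ⟨F, hcomp, hpr⟩
    obtain ⟨R0, hR0, rfl⟩ := completion_shape hWF hAt hcomp
    have hprS : AF.isPr ⟨I.A, I.R ∪ R0⟩ S := hpr
    refine ⟨Or.inr rfl,
      ⟨I.A ∪ {w1, w2}, ∅, (I.R ∪ R0) ∪ satt S w2, {(w1, w2)}⟩, ?_, ⟨rfl, rfl⟩, ?_, ?_⟩
    · -- PartOf
      refine ⟨⟨Set.disjoint_empty _, ?_, ?_, ?_⟩, ?_, ?_, ?_, ?_, ?_, ?_⟩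
      · rw [Set.disjoint_singleton_right]
        rintro ((h | h) | h)
        · exact hw1 (hRA h).1
        · exact hw1 (hRqA (hR0 h)).1
        · obtain ⟨s, hs, heq⟩ := h
          rw [Prod.mk.injEq] at heq
          exact hne heq.1
      · rw [Set.union_empty]
        exact (Set.subset_union_left.trans (hsubP R0 hR0))
      · rw [Set.union_empty]
        exact (Set.subset_union_right.trans (hsubP R0 hR0))
      · show (I.A ∪ {w1}) ∪ {w2} ⊆ I.A ∪ {w1, w2}
        rw [hA'']
      · show I.A ∪ {w1, w2} ⊆ ((I.A ∪ {w1}) ∪ {w2}) ∪ ({w2} \ {w2})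
        rw [hA'', Set.diff_self, Set.union_empty]
      · show (I.R ∪ satt S w2) ∩ _ ⊆ _
        refine Set.inter_subset_left.trans ?_
        rintro p (hp | hp)
        · exact Or.inl (Or.inl hp)
        · exact Or.inr hp
      · rintro p ((hp | hp) | hp)
        · exact Or.inl (Or.inl hp)
        · exact Or.inr (Or.inl (hR0 hp))
        · exact Or.inl (Or.inr hp)
      · exact Set.empty_subset _
      · exact Set.subset_union_right
    · -- S ∪ {w1} preferred after adding (w1,w2)
      show AF.isPr _ _
      have hc : (IAF.cert ⟨I.A ∪ {w1, w2}, ∅,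
          ((I.R ∪ R0) ∪ satt S w2) ∪ {(w1, w2)}, {(w1, w2)} \ {(w1, w2)}⟩) =
          Fp I.A (I.R ∪ R0) S w1 w2 := by
        rw [IAF.cert]
        show AF.mk _ _ = AF.mk _ _
        rw [Set.inter_eq_left.mpr (hsubP R0 hR0)]
      rw [show (IAF.addE ⟨I.A ∪ {w1, w2}, ∅, (I.R ∪ R0) ∪ satt S w2, {(w1, w2)}⟩
            (Elem.att (w1, w2))).cert =
          Fp I.A (I.R ∪ R0) S w1 w2 from hc]
      exact (pr_iff (hR2 R0 hR0) hS hw1 hw2 hne).mp hprS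
    · -- not preferred after removing (w1,w2)
      show ¬ AF.isPr _ _
      have hc : (IAF.cert ⟨I.A ∪ {w1, w2}, ∅,
          (I.R ∪ R0) ∪ satt S w2, {(w1, w2)} \ {(w1, w2)}⟩) =
          Fm I.A (I.R ∪ R0) S w1 w2 := by
        rw [IAF.cert]
        show AF.mk _ _ = AF.mk _ _
        rw [Set.inter_eq_left.mpr
          (Set.subset_union_left.trans (hsubP R0 hR0) :
            (I.R ∪ R0) ∪ satt S w2 ⊆ _)]
      rw [show (IAF.subE ⟨I.A ∪ {w1, w2}, ∅, (I.R ∪ R0) ∪ satt S w2, {(w1, w2)}⟩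
            (Elem.att (w1, w2))).cert =
          Fm I.A (I.R ∪ R0) S w1 w2 from hc]
      exact not_pr_m (hR2 R0 hR0) hS hw1 hw2 hne
  · -- relevance → PosVer
    rintro ⟨hunc, I1, hpart, honly, hplus, hminus⟩
    obtain ⟨hAq1, hRq1⟩ := honly
    obtain ⟨hWF1, hAsub, hAsup, hRlow, hRhigh, hAq, hRq⟩ := hpart
    have hA1 : I1.A = I.A ∪ {w1, w2} := by
      apply subset_antisymm
      · refine hAsup.trans ?_
        show ((I.A ∪ {w1}) ∪ {w2}) ∪ ({w2} \ {w2}) ⊆ _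
        rw [hA'', Set.diff_self, Set.union_empty]
      · rw [← hA'']
        exact hAsub
    have hw12R1 : (w1, w2) ∉ I1.R := by
      have hd := hWF1.2.1
      rw [hRq1, Set.disjoint_singleton_right] at hd
      exact hd
    have hRsup : I.R ∪ satt S w2 ⊆ I1.R := by
      intro p hp
      apply hRlow
      refine ⟨hp, ?_⟩
      rw [hAq1, Set.union_empty, hA1]
      rcases hp with hp | hp
      · exact ⟨Or.inl (hRA hp).1, Or.inl (hRA hp).2⟩
      · obtain ⟨s, hs, rfl⟩ := hp
        exact ⟨Or.inr hw2m, Or.inl (hS hs)⟩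
    set R0' : Set (α × α) := I1.R ∩ I.Rq with hR0def
    have hR0 : R0' ⊆ I.Rq := Set.inter_subset_right
    have hR1eq : I1.R = (I.R ∪ R0') ∪ satt S w2 := by
      apply subset_antisymm
      · intro p hp
        rcases hRhigh hp with (h | h) | (h | h)
        · exact Or.inl (Or.inl h)
        · exact Or.inr h
        · exact Or.inl (Or.inr ⟨hp, h⟩)
        · rw [Set.mem_singleton_iff] at h
          exact absurd (h ▸ hp) hw12R1
      · rintro p ((hp | hp) | hp)
        · exact hRsup (Or.inl hp)
        · exact hp.1
        · exact hRsup (Or.inr hp)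
    have hplus' : AF.isPr (IAF.cert (I1.addR {(w1, w2)})) (S ∪ {w1}) := hplus
    have hc : IAF.cert (I1.addR {(w1, w2)}) =
        Fp I.A (I.R ∪ R0') S w1 w2 := by
      rw [IAF.cert]
      show AF.mk I1.A ((I1.R ∪ {(w1, w2)}) ∩ I1.A ×ˢ I1.A) = AF.mk _ _
      rw [hA1, hR1eq, Set.inter_eq_left.mpr (hsubP _ hR0)]
    rw [hc] at hplus'
    have hprS := (pr_iff (hR2 _ hR0) hS hw1 hw2 hne).mpr hplus'
    exact ⟨⟨I.A, I.R ∪ R0'⟩, completion_of hWF hAt hR0, hprS⟩
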